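/- Let d ≠ 0, μ > 0, ε ∈ ℝ, and let V : ℝ → ℝ be 2π-periodic and continuously differentiable with ‖V‖_∞ := sup_x |V(x)| and ‖V'‖_∞ := sup_x |V'(x)|. Then for every a > 0 and every 2π-periodic twice continuously differentiable function φ : ℝ → ℂ, ‖ ε V φ' − (|ε|/2) ‖V'‖_∞ φ ‖_{L²} ≤ (|ε| a / |d|) ‖V‖_∞ ‖ i d φ'' − μ φ ‖_{L²} + |ε| ( ( a μ / |d| + 1/(4a) ) ‖V‖_∞ + (1/2) ‖V'‖_∞ ) ‖φ‖_{L²}. -/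

import Mathlib

noncomputable section

open Real MeasureTheory Set

/-- 2π-periodicity. -/
def Per (f : ℝ → ℂ) : Prop := Function.Periodic f (2 * Real.pi)

/-- Squared L² norm on [-π, π]. -/
def L2sq (v : ℝ → ℂ) : ℝ := ∫ x in (-Real.pi)..Real.pi, ‖v x‖ ^ 2

/-- L² norm on [-π, π]. -/
def L2norm (v : ℝ → ℂ) : ℝ := Real.sqrt (L2sq v)

/-- H¹ norm. -/
def H1norm (v : ℝ → ℂ) : ℝ := Real.sqrt (L2sq v + L2sq (deriv v))

/-- H² norm. -/
def H2norm (v : ℝ → ℂ) : ℝ :=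
  Real.sqrt (L2sq v + L2sq (deriv v) + L2sq (deriv (deriv v)))

/-- A stationary solution of the (perturbed) Lugiato–Lefever equation with parameter ε:
a 2π-periodic C² function `u` with
`-d u'' + i ε V u' + (ζ - iμ) u - |u|² u + i f₀ = 0`. -/
def StatSol (d ζ μ f₀ ε : ℝ) (V : ℝ → ℝ) (u : ℝ → ℂ) : Prop :=
  ContDiff ℝ 2 u ∧ Per u ∧ ∀ x : ℝ,
    -(d : ℂ) * deriv (deriv u) x + Complex.I * (ε : ℂ) * (V x : ℂ) * deriv u x
      + ((ζ : ℂ) - Complex.I * (μ : ℂ)) * u x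
      - ((‖u x‖ ^ 2 : ℝ) : ℂ) * u x + Complex.I * (f₀ : ℂ) = 0

/-- The linearized operator `L_u φ = -d φ'' + (ζ - iμ - 2|u|²) φ - u² conj(φ)`. -/
def Lop (d ζ μ : ℝ) (u φ : ℝ → ℂ) : ℝ → ℂ := fun x =>
  -(d : ℂ) * deriv (deriv φ) x
    + ((ζ : ℂ) - Complex.I * (μ : ℂ) - 2 * ((‖u x‖ ^ 2 : ℝ) : ℂ)) * φ x
    - (u x) ^ 2 * (starRingEnd ℂ) (φ x)

/-- The adjoint linearized operator `L_u* ψ = -d ψ'' + (ζ + iμ - 2|u|²) ψ - u² conj(ψ)`. -/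
def LopAdj (d ζ μ : ℝ) (u ψ : ℝ → ℂ) : ℝ → ℂ := fun x =>
  -(d : ℂ) * deriv (deriv ψ) x
    + ((ζ : ℂ) + Complex.I * (μ : ℂ) - 2 * ((‖u x‖ ^ 2 : ℝ) : ℂ)) * ψ x
    - (u x) ^ 2 * (starRingEnd ℂ) (ψ x)

/-- Non-degeneracy: every 2π-periodic C² solution of `L_{u₀} φ = 0` is a real
multiple of `u₀'`. -/
def NonDeg (d ζ μ : ℝ) (u₀ : ℝ → ℂ) : Prop :=
  ∀ φ : ℝ → ℂ, ContDiff ℝ 2 φ → Per φ → (∀ x, Lop d ζ μ u₀ φ x = 0) →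
    ∃ a : ℝ, ∀ x, φ x = (a : ℂ) * deriv u₀ x

/-- The effective potential `V_eff(σ) = Re ∫ i V(x+σ) u₀'(x) conj(φ₀*(x)) dx`. -/
def Veff (V : ℝ → ℝ) (u₀ φ₀ : ℝ → ℂ) (σ : ℝ) : ℝ :=
  (∫ x in (-Real.pi)..Real.pi,
    Complex.I * (V (x + σ) : ℂ) * deriv u₀ x * (starRingEnd ℂ) (φ₀ x)).re

/-- The expression `Re ∫ i V'(x+σ) u₀'(x) conj(φ₀*(x)) dx` for `V_eff'(σ)`. -/
def VeffD (V : ℝ → ℝ) (u₀ φ₀ : ℝ → ℂ) (σ : ℝ) : ℝ :=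
  (∫ x in (-Real.pi)..Real.pi,
    Complex.I * ((deriv V (x + σ) : ℝ) : ℂ) * deriv u₀ x * (starRingEnd ℂ) (φ₀ x)).re

/-! The potential term is at most `|ε| ‖V‖_∞ ‖φ'‖ + (|ε|/2) ‖V'‖_∞ ‖φ‖` by the triangle inequality.
Integrating by parts over a period gives `‖φ'‖² ≤ ‖φ‖ ‖φ''‖`, hence `‖φ'‖ ≤ a ‖φ''‖ + ‖φ‖ / (4a)`
by AM–GM, and `|d| ‖φ''‖ ≤ ‖i d φ'' - μ φ‖ + μ ‖φ‖` by the triangle inequality again. -/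

theorem Function.Periodic.deriv {E : Type*} [NormedAddCommGroup E] [NormedSpace ℝ E]
    {f : ℝ → E} {c : ℝ} (h : Function.Periodic f c) : Function.Periodic (deriv f) c := fun x => by
  rw [← deriv_comp_add_const, h.funext]

theorem Function.Periodic.abs_le_iSup_abs {f : ℝ → ℝ} {c : ℝ} (h : Function.Periodic f c)
    (hc : c ≠ 0) (hf : Continuous f) (x : ℝ) : |f x| ≤ ⨆ y, |f y| :=
  le_ciSup ((h.comp abs).isBounded_of_continuous hc hf.abs).bddAbove x

lemma le_mul_add_div_of_sq_le_mul {p q b a : ℝ} (ha : 0 < a) (hq : 0 ≤ q) (hb : 0 ≤ b)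
    (h : p ^ 2 ≤ q * b) : p ≤ a * q + b / (4 * a) := by
  have hsq : q * b ≤ (a * q + b / (4 * a)) ^ 2 := by
    have : (a * q + b / (4 * a)) ^ 2 = (a * q - b / (4 * a)) ^ 2 + q * b := by
      field_simp; ring
    nlinarith [sq_nonneg (a * q - b / (4 * a))]
  exact le_of_sq_le_sq (h.trans hsq) (by positivity)

lemma L2sq_nonneg (f : ℝ → ℂ) : 0 ≤ L2sq f :=
  intervalIntegral.integral_nonneg (by linarith [pi_pos]) fun _ _ => by positivity

lemma L2norm_nonneg (f : ℝ → ℂ) : 0 ≤ L2norm f := Real.sqrt_nonneg _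

lemma Continuous.memLp_restrict_Ioc {f : ℝ → ℂ} (hf : Continuous f) (p : ENNReal) (a b : ℝ) :
    MemLp f p (volume.restrict (Ioc a b)) := by
  obtain ⟨C, hC⟩ := (isCompact_Icc (a := a) (b := b)).exists_bound_of_continuousOn hf.continuousOn
  refine (memLp_top_of_bound hf.aestronglyMeasurable C ?_).mono_exponent le_top
  filter_upwards [ae_restrict_mem measurableSet_Ioc] with x hx
  exact hC x (Ioc_subset_Icc_self hx)

lemma L2norm_eq_norm_toLp {f : ℝ → ℂ} (hf : Continuous f) :
    L2norm f = ‖(hf.memLp_restrict_Ioc 2 (-π) π).toLp f‖ := by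
  rw [Lp.norm_toLp, MemLp.eLpNorm_eq_integral_rpow_norm two_ne_zero ENNReal.ofNat_ne_top
    (hf.memLp_restrict_Ioc 2 (-π) π), L2norm, L2sq,
    intervalIntegral.integral_of_le (by linarith [pi_pos]),
    ENNReal.toReal_ofReal (by positivity), Real.sqrt_eq_rpow]
  norm_num

lemma L2norm_const_mul (c : ℂ) (f : ℝ → ℂ) : L2norm (fun x => c * f x) = ‖c‖ * L2norm f := by
  simp_rw [L2norm, L2sq, norm_mul, mul_pow]
  rw [intervalIntegral.integral_const_mul, Real.sqrt_mul (by positivity),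
    Real.sqrt_sq (norm_nonneg c)]

lemma L2norm_add_le {f g : ℝ → ℂ} (hf : Continuous f) (hg : Continuous g) :
    L2norm (fun x => f x + g x) ≤ L2norm f + L2norm g := by
  show L2norm (f + g) ≤ _
  rw [L2norm_eq_norm_toLp hf, L2norm_eq_norm_toLp hg, L2norm_eq_norm_toLp (hf.add hg),
    MemLp.toLp_add]
  exact norm_add_le _ _

lemma L2norm_sub_le {f g : ℝ → ℂ} (hf : Continuous f) (hg : Continuous g) :
    L2norm (fun x => f x - g x) ≤ L2norm f + L2norm g := by
  show L2norm (f - g) ≤ _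
  rw [L2norm_eq_norm_toLp hf, L2norm_eq_norm_toLp hg, L2norm_eq_norm_toLp (hf.sub hg),
    MemLp.toLp_sub]
  exact norm_sub_le _ _

lemma L2norm_le_L2norm_sub_add {f g : ℝ → ℂ} (hf : Continuous f) (hg : Continuous g) :
    L2norm f ≤ L2norm (fun x => f x - g x) + L2norm g := by
  calc L2norm f = L2norm (fun x => (f x - g x) + g x) := by simp only [sub_add_cancel]
    _ ≤ _ := L2norm_add_le (f := fun x => f x - g x) (hf.sub hg) hg

lemma L2norm_mul_le {w f : ℝ → ℂ} {M : ℝ} (hw : Continuous w) (hf : Continuous f)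
    (hM : ∀ x, ‖w x‖ ≤ M) : L2norm (fun x => w x * f x) ≤ M * L2norm f := by
  have hM0 : 0 ≤ M := (norm_nonneg _).trans (hM 0)
  calc L2norm (fun x => w x * f x) ≤ L2norm (fun x => (M : ℂ) * f x) := by
        refine Real.sqrt_le_sqrt (intervalIntegral.integral_mono_on (by linarith [pi_pos])
          (((hw.mul hf).norm.pow 2).intervalIntegrable _ _)
          (((continuous_const.mul hf).norm.pow 2).intervalIntegrable _ _) fun x _ => ?_)
        simp only [norm_mul, Complex.norm_real, Real.norm_of_nonneg hM0]
        gcongr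
        exact hM x
    _ = M * L2norm f := by rw [L2norm_const_mul, Complex.norm_real, Real.norm_of_nonneg hM0]

lemma L2norm_potential_le {V : ℝ → ℝ} {f g : ℝ → ℂ} {ε M c : ℝ} (hV : Continuous V)
    (hf : Continuous f) (hg : Continuous g) (hVM : ∀ x, |V x| ≤ M) (hc : 0 ≤ c) :
    L2norm (fun x => (ε : ℂ) * (V x : ℂ) * f x - (c : ℂ) * g x)
      ≤ |ε| * M * L2norm f + c * L2norm g := by
  refine (L2norm_sub_le (by fun_prop) (by fun_prop)).trans (add_le_add ?_ ?_)
  · refine L2norm_mul_le (w := fun x => (ε : ℂ) * (V x : ℂ)) (by fun_prop) hf fun x => ?_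
    simpa [Complex.norm_real] using mul_le_mul_of_nonneg_left (hVM x) (abs_nonneg ε)
  · rw [L2norm_const_mul, Complex.norm_real, Real.norm_of_nonneg hc]

lemma abs_mul_L2norm_le {f g : ℝ → ℂ} (hf : Continuous f) (hg : Continuous g) (d μ : ℝ) :
    |d| * L2norm f ≤ L2norm (fun x => Complex.I * (d : ℂ) * f x - (μ : ℂ) * g x)
      + |μ| * L2norm g := by
  have := L2norm_le_L2norm_sub_add (f := fun x => Complex.I * (d : ℂ) * f x)
    (g := fun x => (μ : ℂ) * g x) (by fun_prop) (by fun_prop)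
  rwa [L2norm_const_mul, L2norm_const_mul, norm_mul, Complex.norm_I, one_mul, Complex.norm_real,
    Complex.norm_real, Real.norm_eq_abs, Real.norm_eq_abs] at this

lemma norm_integral_conj_mul_le {f g : ℝ → ℂ} (hf : Continuous f) (hg : Continuous g) :
    ‖∫ x in (-π)..π, starRingEnd ℂ (f x) * g x‖ ≤ L2norm f * L2norm g := by
  rw [L2norm_eq_norm_toLp hf, L2norm_eq_norm_toLp hg]
  refine le_of_eq_of_le ?_ (norm_inner_le_norm (𝕜 := ℂ) _ _)
  rw [L2.inner_def, intervalIntegral.integral_of_le (by linarith [pi_pos])]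
  congr 1
  refine integral_congr_ae ?_
  filter_upwards [MemLp.coeFn_toLp (hf.memLp_restrict_Ioc 2 (-π) π),
    MemLp.coeFn_toLp (hg.memLp_restrict_Ioc 2 (-π) π)] with x hfx hgx
  simp [hfx, hgx, mul_comm]

lemma integral_conj_mul_deriv_deriv {φ : ℝ → ℂ} (hφ : ContDiff ℝ 2 φ) (hper : Per φ) :
    ∫ x in (-π)..π, starRingEnd ℂ (φ x) * deriv (deriv φ) x = -(L2sq (deriv φ) : ℂ) := by
  have hφ' : ContDiff ℝ 1 (deriv φ) := hφ.deriv'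
  have hboundary : ∀ f : ℝ → ℂ, Per f → f π = f (-π) := fun f hf => by
    simpa [two_mul] using hf (-π)
  rw [intervalIntegral.integral_mul_deriv_eq_deriv_mul (u := fun x => starRingEnd ℂ (φ x))
      (u' := fun x => starRingEnd ℂ (deriv φ x))
      (fun x _ => (hφ.differentiable two_ne_zero x).hasDerivAt.star)
      (fun x _ => (hφ'.differentiable one_ne_zero x).hasDerivAt)
      ((hφ.continuous_deriv one_le_two).star.intervalIntegrable _ _)
      ((hφ'.continuous_deriv le_rfl).intervalIntegrable _ _),
    hboundary φ hper, hboundary _ hper.deriv, sub_self, zero_sub, L2sq,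
    ← intervalIntegral.integral_ofReal]
  simp [Complex.conj_mul']

lemma L2norm_deriv_sq_le {φ : ℝ → ℂ} (hφ : ContDiff ℝ 2 φ) (hper : Per φ) :
    L2norm (deriv φ) ^ 2 ≤ L2norm φ * L2norm (deriv (deriv φ)) := by
  calc L2norm (deriv φ) ^ 2 = ‖-(L2sq (deriv φ) : ℂ)‖ := by
        rw [norm_neg, Complex.norm_real, Real.norm_of_nonneg (L2sq_nonneg _), L2norm,
          Real.sq_sqrt (L2sq_nonneg _)]
    _ ≤ L2norm φ * L2norm (deriv (deriv φ)) := by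
        rw [← integral_conj_mul_deriv_deriv hφ hper]
        exact norm_integral_conj_mul_le hφ.continuous (hφ.deriv'.continuous_deriv le_rfl)

lemma L2norm_deriv_le {φ : ℝ → ℂ} (hφ : ContDiff ℝ 2 φ) (hper : Per φ) {a : ℝ} (ha : 0 < a) :
    L2norm (deriv φ) ≤ a * L2norm (deriv (deriv φ)) + L2norm φ / (4 * a) :=
  le_mul_add_div_of_sq_le_mul ha (L2norm_nonneg _) (L2norm_nonneg _)
    ((L2norm_deriv_sq_le hφ hper).trans_eq (mul_comm _ _))

/-- **Lemma (relative bound of `L₂` with respect to `L₁`).** -/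
theorem stmt_10
    (d μ ε : ℝ) (hd : d ≠ 0) (hμ : 0 < μ)
    (V : ℝ → ℝ) (hVper : Function.Periodic V (2 * Real.pi)) (hV : ContDiff ℝ 1 V)
    (a : ℝ) (ha : 0 < a)
    (φ : ℝ → ℂ) (hφ : ContDiff ℝ 2 φ) (hφper : Per φ) :
    L2norm (fun x => (ε : ℂ) * (V x : ℂ) * deriv φ x
        - (((|ε| / 2) * (⨆ y : ℝ, |deriv V y|) : ℝ) : ℂ) * φ x) ≤
      (|ε| * a / |d|) * (⨆ y : ℝ, |V y|) *
        L2norm (fun x => Complex.I * (d : ℂ) * deriv (deriv φ) x - (μ : ℂ) * φ x)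
      + |ε| * ((a * μ / |d| + 1 / (4 * a)) * (⨆ y : ℝ, |V y|)
          + (1 / 2) * (⨆ y : ℝ, |deriv V y|)) * L2norm φ := by
  set M := ⨆ y : ℝ, |V y|
  set M' := ⨆ y : ℝ, |deriv V y|
  set N := L2norm (fun x => Complex.I * (d : ℂ) * deriv (deriv φ) x - (μ : ℂ) * φ x)
  have hM : 0 ≤ M := Real.iSup_nonneg fun _ => abs_nonneg _
  have hM' : 0 ≤ M' := Real.iSup_nonneg fun _ => abs_nonneg _
  have hd' : 0 < |d| := abs_pos.mpr hd
  have hVM : ∀ x, |V x| ≤ M := hVper.abs_le_iSup_abs (by positivity) hV.continuous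
  have hφ'c : Continuous (deriv φ) := hφ.continuous_deriv one_le_two
  have hφ''c : Continuous (deriv (deriv φ)) := hφ.deriv'.continuous_deriv le_rfl
  have hsecond : L2norm (deriv (deriv φ)) ≤ (N + μ * L2norm φ) / |d| := by
    rw [le_div_iff₀' hd', ← abs_of_pos hμ]
    exact abs_mul_L2norm_le hφ''c hφ.continuous d μ
  calc _ ≤ |ε| * M * L2norm (deriv φ) + |ε| / 2 * M' * L2norm φ :=
        L2norm_potential_le hV.continuous hφ'c hφ.continuous hVM (by positivity)
    _ ≤ |ε| * M * (a * ((N + μ * L2norm φ) / |d|) + L2norm φ / (4 * a))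
          + |ε| / 2 * M' * L2norm φ := by
        gcongr
        exact (L2norm_deriv_le hφ hφper ha).trans (by gcongr)
    _ = _ := by field_simp; ring
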